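/- arXiv:1811.10128 — 2 statements merged into one kernel-verified Lean document; each statement's English description precedes it below -/
import Mathlib

section
/- For any quasi-Banach lattices X, Y of measurable functions on a σ-finite measure space, any α > 0, 0 < θ < 1 and 0 < p ≤ ∞, the real interpolation space satisfies ((X, Y)_{θ,p})^α = (X^α, Y^α)_{θ, p/α} with equivalent quasinorms. -/
/-!
Decompositions for the two couples correspond to each other. A splitting `|f|^{1/α} = u + v`
gives `|f| ≤ (2|u|)^α + (2|v|)^α`, and a pointwise Riesz decomposition of `f` along this bound
yields `f = U + V` with `|U|^{1/α} ≤ 2|u|`, `|V|^{1/α} ≤ 2|v|`; the converse is symmetric. With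
the lattice property and the quasi-triangle inequality this gives
`K(t, f; X^α, Y^α) ≍ K(t^{1/α}, |f|^{1/α}; X, Y)^α` uniformly in `t` and `f`. The
substitution `t = s^α` only rescales the Haar measure `dt/t` by `α`, and it turns
`t^{-θ} K(t^{1/α})^α` into `(s^{-θ} K(s))^α`, whose `L^{p/α}(ds/s)` norm is the `α`-th power of
the `L^p(ds/s)` norm of `s^{-θ} K(s)`.
-/


open MeasureTheory Filter Topology ENNReal

noncomputable section

/-- The "gauge" (extended-real-valued norm) of a (quasi-)normed lattice of
measurable functions: `N f = ∞` encodes `f ∉ X`. -/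
abbrev LatN (α : Type*) := (α → ℝ) → ℝ≥0∞

/-- Lattice (ideal space) property of a gauge. -/
def IsLat {α : Type*} [MeasurableSpace α] (μ : Measure α) (N : LatN α) : Prop :=
  ∀ f g : α → ℝ, (∀ᵐ x ∂μ, |f x| ≤ |g x|) → N f ≤ N g

/-- Quasi-norm (quasi-triangle inequality) property of a gauge. -/
def IsQNormed {α : Type*} (N : LatN α) : Prop :=
  ∃ K : ℝ≥0∞, 1 ≤ K ∧ K ≠ ⊤ ∧ ∀ f g : α → ℝ, N (f + g) ≤ K * (N f + N g)

/-- Norm (triangle inequality) property of a gauge, as for a Banach lattice. -/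
def IsNormed {α : Type*} (N : LatN α) : Prop :=
  ∀ f g : α → ℝ, N (f + g) ≤ N f + N g

/-- The Fatou property of a lattice gauge. -/
def HasFatou {α : Type*} [MeasurableSpace α] (μ : Measure α) (N : LatN α) : Prop :=
  ∀ (f : ℕ → α → ℝ) (g : α → ℝ), (∀ n, N (f n) ≤ 1) →
    (∀ᵐ x ∂μ, Tendsto (fun n => f n x) atTop (𝓝 (g x))) → N g ≤ 1

/-- `r`-convexity of a lattice gauge. -/
def RConvexN {α : Type*} (N : LatN α) (r : ℝ) : Prop :=
  ∃ M : ℝ≥0∞, M ≠ ⊤ ∧ ∀ f g : α → ℝ,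
    N (fun x => (|f x| ^ r + |g x| ^ r) ^ (1 / r)) ≤ M * (N f ^ r + N g ^ r) ^ (1 / r)

/-- The power lattice `X^δ`, with `‖f‖_{X^δ} = ‖|f|^{1/δ}‖_X^δ`. -/
def powN {α : Type*} (N : LatN α) (δ : ℝ) : LatN α :=
  fun f => (N fun x => |f x| ^ (1 / δ)) ^ δ

/-- The pointwise product lattice `XY`. -/
def prodN {α : Type*} (N M : LatN α) : LatN α :=
  fun h => sInf {c | ∃ a b : α → ℝ, (∀ x, |h x| ≤ |a x| * |b x|) ∧ c = N a * M b}

/-- The Calderón–Lozanovskiĭ product `X^{1-θ} Y^{θ}`. -/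
def clProdN {α : Type*} (N M : LatN α) (θ : ℝ) : LatN α :=
  prodN (powN N (1 - θ)) (powN M θ)

/-- The order (Köthe) dual gauge `X'`. -/
def dualN {α : Type*} [MeasurableSpace α] (μ : Measure α) (N : LatN α) : LatN α :=
  fun g => ⨆ f ∈ {f : α → ℝ | N f ≤ 1}, ∫⁻ x, ENNReal.ofReal |f x * g x| ∂μ

/-- The gauge of `L¹(μ)`. -/
def L1N {α : Type*} [MeasurableSpace α] (μ : Measure α) : LatN α :=
  fun f => ∫⁻ x, ENNReal.ofReal |f x| ∂μ

/-- The gauge of `L^∞(μ)`. -/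
def LinfN {α : Type*} [MeasurableSpace α] (μ : Measure α) : LatN α :=
  fun f => eLpNorm f ⊤ μ

/-- The K-functional of a couple of lattice gauges:
`K(t, f; X, Y) = inf { ‖u‖_X + t ‖v‖_Y : f = u + v }`. -/
def KN {α : Type*} (N M : LatN α) (t : ℝ) (f : α → ℝ) : ℝ≥0∞ :=
  sInf {c | ∃ u v : α → ℝ, (∀ x, f x = u x + v x) ∧
    c = N u + ENNReal.ofReal t * M v}

/-- The real-interpolation norm with parameters `θ, p` built from a K-functional. -/
def interpOfK (K : ℝ → ℝ≥0∞) (θ : ℝ) (p : ℝ≥0∞) : ℝ≥0∞ :=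
  if p = ⊤ then ⨆ t : Set.Ioi (0 : ℝ), ENNReal.ofReal ((t : ℝ) ^ (-θ)) * K (t : ℝ)
  else (∫⁻ t in Set.Ioi (0 : ℝ),
      (ENNReal.ofReal (t ^ (-θ)) * K t) ^ p.toReal / ENNReal.ofReal t) ^ (1 / p.toReal)

/-- The real interpolation space `(X, Y)_{θ, p}` as a lattice gauge. -/
def interpN {α : Type*} (N M : LatN α) (θ : ℝ) (p : ℝ≥0∞) : LatN α :=
  fun f => interpOfK (fun t => KN N M t f) θ p


theorem exists_eq_add_of_abs_le_add {x a b : ℝ} (h : |x| ≤ a + b) (ha : 0 ≤ a) (hb : 0 ≤ b) :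
    ∃ u v : ℝ, x = u + v ∧ |u| ≤ a ∧ |v| ≤ b := by
  rcases le_or_gt |x| a with hxa | hxa
  · exact ⟨x, 0, by ring, hxa, by simpa using hb⟩
  rcases le_or_gt 0 x with hx | hx
  · rw [abs_of_nonneg hx] at h hxa
    exact ⟨a, x - a, by ring, by rw [abs_of_nonneg ha],
      by rw [abs_of_pos (by linarith)]; linarith⟩
  · rw [abs_of_neg hx] at h hxa
    exact ⟨-a, x + a, by ring, by rw [abs_neg, abs_of_nonneg ha],
      by rw [abs_of_neg (by linarith)]; linarith⟩

theorem Real.add_rpow_le_rpow_two_mul_add {x y a : ℝ} (hx : 0 ≤ x) (hy : 0 ≤ y) (ha : 0 ≤ a) :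
    (x + y) ^ a ≤ (2 * x) ^ a + (2 * y) ^ a := by
  rcases le_total x y with hxy | hxy
  · exact (Real.rpow_le_rpow (by positivity) (by linarith) ha).trans
      (le_add_of_nonneg_left (by positivity))
  · exact (Real.rpow_le_rpow (by positivity) (by linarith) ha).trans
      (le_add_of_nonneg_right (by positivity))

theorem ENNReal.rpow_add_rpow_le_two_mul_add_rpow {a : ℝ} (ha : 0 ≤ a) (x y : ℝ≥0∞) :
    x ^ a + y ^ a ≤ 2 * (x + y) ^ a := by
  rw [two_mul]
  gcongr
  exacts [le_self_add, le_add_self]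

section Lattice

variable {ι : Type*} [MeasurableSpace ι] {μ : Measure ι} {N : LatN ι}

theorem IsLat.le_two_mul_pow_mul (hN : IsLat μ N) {K : ℝ≥0∞}
    (hK : ∀ f g : ι → ℝ, N (f + g) ≤ K * (N f + N g)) (n : ℕ) {g h : ι → ℝ}
    (hgh : ∀ x, |g x| ≤ 2 ^ n * |h x|) : N g ≤ (2 * K) ^ n * N h := by
  induction n generalizing g with
  | zero => simpa using hN g h (ae_of_all _ (by simpa using hgh))
  | succ n ih =>
    set h' : ι → ℝ := fun x => 2 ^ n * h x
    have hgh' : N g ≤ N (h' + h') := hN _ _ <| ae_of_all _ fun x => by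
      simp only [h', Pi.add_apply, ← two_mul, abs_mul, abs_two, abs_pow]
      simpa [pow_succ, mul_comm, mul_left_comm] using hgh x
    have hh' : N h' ≤ (2 * K) ^ n * N h := ih fun x => by simp [h', abs_mul]
    calc N g ≤ K * (N h' + N h') := hgh'.trans (hK _ _)
      _ = 2 * K * N h' := by ring
      _ ≤ 2 * K * ((2 * K) ^ n * N h) := by gcongr
      _ = (2 * K) ^ (n + 1) * N h := by ring

theorem IsLat.exists_le_mul_of_abs_le_mul (hN : IsLat μ N) (hq : IsQNormed N) (c : ℝ) :
    ∃ C : ℝ≥0∞, C ≠ ⊤ ∧ ∀ g h : ι → ℝ, (∀ x, |g x| ≤ c * |h x|) → N g ≤ C * N h := by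
  obtain ⟨K, -, hK, hKN⟩ := hq
  have hc : c ≤ 2 ^ ⌈c⌉₊ := (Nat.le_ceil c).trans (mod_cast Nat.lt_two_pow_self.le)
  exact ⟨(2 * K) ^ ⌈c⌉₊, pow_ne_top (mul_ne_top ofNat_ne_top hK), fun g h hgh =>
    hN.le_two_mul_pow_mul hKN _ fun x => (hgh x).trans (by gcongr)⟩

theorem IsLat.exists_le_mul_of_abs_le_mul₂ {N' : LatN ι} (hN : IsLat μ N) (hN' : IsLat μ N')
    (hq : IsQNormed N) (hq' : IsQNormed N') (c : ℝ) :
    ∃ C : ℝ≥0∞, C ≠ ⊤ ∧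
      (∀ g h : ι → ℝ, (∀ x, |g x| ≤ c * |h x|) → N g ≤ C * N h) ∧
      (∀ g h : ι → ℝ, (∀ x, |g x| ≤ c * |h x|) → N' g ≤ C * N' h) := by
  obtain ⟨C, hC, hNC⟩ := hN.exists_le_mul_of_abs_le_mul hq c
  obtain ⟨C', hC', hNC'⟩ := hN'.exists_le_mul_of_abs_le_mul hq' c
  exact ⟨max C C', max_ne_top hC hC',
    fun g h hgh => (hNC g h hgh).trans (by gcongr; exact le_max_left _ _),
    fun g h hgh => (hNC' g h hgh).trans (by gcongr; exact le_max_right _ _)⟩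

end Lattice

section PowerLattice

variable {ι : Type*} {N : LatN ι} {C : ℝ≥0∞} {a c : ℝ}

theorem powN_rpow_inv (ha : a ≠ 0) (f : ι → ℝ) :
    powN N a f ^ a⁻¹ = N fun x => |f x| ^ (1 / a) :=
  ENNReal.rpow_rpow_inv ha _

theorem powN_le_mul_rpow_of_abs_le
    (hN : ∀ g h : ι → ℝ, (∀ x, |g x| ≤ c * |h x|) → N g ≤ C * N h) (ha : 0 < a) (hc : 0 ≤ c)
    {U u : ι → ℝ} (hU : ∀ x, |U x| ≤ (c * |u x|) ^ a) : powN N a U ≤ (C * N u) ^ a := by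
  refine ENNReal.rpow_le_rpow (hN _ _ fun x => ?_) ha.le
  rw [abs_of_nonneg (by positivity), one_div,
    Real.rpow_inv_le_iff_of_pos (abs_nonneg _) (by positivity) ha]
  exact hU x

theorem le_mul_powN_rpow_inv_of_abs_le
    (hN : ∀ g h : ι → ℝ, (∀ x, |g x| ≤ c * |h x|) → N g ≤ C * N h) (ha : a ≠ 0)
    {u U : ι → ℝ} (hu : ∀ x, |u x| ≤ c * |U x| ^ (1 / a)) : N u ≤ C * powN N a U ^ a⁻¹ := by
  rw [powN_rpow_inv ha]
  refine hN u _ fun x => ?_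
  rw [abs_of_nonneg (Real.rpow_nonneg (abs_nonneg _) _)]
  exact hu x

end PowerLattice

section KFunctional

variable {ι : Type*} {N M : LatN ι} {a t : ℝ}

theorem KN_le_of_eq_add {f u v : ι → ℝ} (h : ∀ x, f x = u x + v x) :
    KN N M t f ≤ N u + ENNReal.ofReal t * M v :=
  sInf_le ⟨u, v, h, rfl⟩

theorem le_mul_KN_rpow {f : ι → ℝ} {L C : ℝ≥0∞} (ha : 0 < a) (hC : C ≠ ⊤)
    (h : ∀ u v : ι → ℝ, (∀ x, f x = u x + v x) →
      L ≤ C * (N u + ENNReal.ofReal t * M v) ^ a) :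
    L ≤ C * KN N M t f ^ a := by
  rcases eq_or_ne C 0 with rfl | hC0
  · simpa using h f 0 (by simp)
  rw [mul_comm, ← ENNReal.div_le_iff hC0 hC, ← ENNReal.rpow_inv_le_iff ha]
  refine le_sInf ?_
  rintro _ ⟨u, v, huv, rfl⟩
  rw [ENNReal.rpow_inv_le_iff ha, ENNReal.div_le_iff hC0 hC, mul_comm]
  exact h u v huv

variable [MeasurableSpace ι] {μ : Measure ι} {NX NY : LatN ι}

theorem KN_powN_le_mul_KN_rpow (hX : IsLat μ NX) (hY : IsLat μ NY)
    (hqX : IsQNormed NX) (hqY : IsQNormed NY) (ha : 0 < a) :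
    ∃ C : ℝ≥0∞, C ≠ ⊤ ∧ ∀ (f : ι → ℝ) (t : ℝ), 0 ≤ t →
      KN (powN NX a) (powN NY a) t f ≤
        C * KN NX NY (t ^ a⁻¹) (fun x => |f x| ^ (1 / a)) ^ a := by
  obtain ⟨C, hC, hX2, hY2⟩ := hX.exists_le_mul_of_abs_le_mul₂ hY hqX hqY 2
  have hC' : 2 * C ^ a ≠ ⊤ := mul_ne_top ofNat_ne_top (rpow_ne_top_of_nonneg ha.le hC)
  refine ⟨2 * C ^ a, hC', fun f t ht => le_mul_KN_rpow ha hC' fun u v huv => ?_⟩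
  have hf : ∀ x, |f x| ≤ (2 * |u x|) ^ a + (2 * |v x|) ^ a := fun x => calc
    |f x| = (|f x| ^ (1 / a)) ^ a := by
        rw [← Real.rpow_mul (abs_nonneg _), one_div_mul_cancel ha.ne', Real.rpow_one]
    _ ≤ (|u x| + |v x|) ^ a := by
        gcongr; rw [huv]; exact (le_abs_self _).trans (abs_add_le _ _)
    _ ≤ (2 * |u x|) ^ a + (2 * |v x|) ^ a :=
        Real.add_rpow_le_rpow_two_mul_add (abs_nonneg _) (abs_nonneg _) ha.le
  choose U V hUV hU hV using fun x =>
    exists_eq_add_of_abs_le_add (hf x) (by positivity) (by positivity)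
  calc KN (powN NX a) (powN NY a) t f ≤ powN NX a U + ENNReal.ofReal t * powN NY a V :=
        KN_le_of_eq_add hUV
    _ ≤ (C * NX u) ^ a + ENNReal.ofReal t * (C * NY v) ^ a := by
        gcongr
        exacts [powN_le_mul_rpow_of_abs_le hX2 ha zero_le_two hU,
          powN_le_mul_rpow_of_abs_le hY2 ha zero_le_two hV]
    _ = C ^ a * (NX u ^ a + (ENNReal.ofReal (t ^ a⁻¹) * NY v) ^ a) := by
        rw [ENNReal.mul_rpow_of_nonneg _ _ ha.le, ENNReal.mul_rpow_of_nonneg _ _ ha.le,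
          ENNReal.mul_rpow_of_nonneg _ _ ha.le,
          ENNReal.ofReal_rpow_of_nonneg (by positivity) ha.le, Real.rpow_inv_rpow ht ha.ne']
        ring
    _ ≤ C ^ a * (2 * (NX u + ENNReal.ofReal (t ^ a⁻¹) * NY v) ^ a) := by
        gcongr; exact ENNReal.rpow_add_rpow_le_two_mul_add_rpow ha.le _ _
    _ = 2 * C ^ a * (NX u + ENNReal.ofReal (t ^ a⁻¹) * NY v) ^ a := by ring

theorem KN_rpow_le_mul_KN_powN (hX : IsLat μ NX) (hY : IsLat μ NY)
    (hqX : IsQNormed NX) (hqY : IsQNormed NY) (ha : 0 < a) :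
    ∃ C : ℝ≥0∞, C ≠ ⊤ ∧ ∀ (f : ι → ℝ) (t : ℝ), 0 ≤ t →
      KN NX NY (t ^ a⁻¹) (fun x => |f x| ^ (1 / a)) ^ a ≤
        C * KN (powN NX a) (powN NY a) t f := by
  obtain ⟨C, hC, hX2, hY2⟩ := hX.exists_le_mul_of_abs_le_mul₂ hY hqX hqY (2 ^ (1 / a))
  set L := LpAddConst (ENNReal.ofReal a)⁻¹
  have hCL : C ^ a * L ≠ ⊤ :=
    mul_ne_top (rpow_ne_top_of_nonneg ha.le hC) (LpAddConst_lt_top _).ne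
  refine ⟨C ^ a * L, hCL, fun f t ht => ?_⟩
  have key (U V : ι → ℝ) (hUV : ∀ x, f x = U x + V x) :
      KN NX NY (t ^ a⁻¹) (fun x => |f x| ^ (1 / a)) ^ a ≤
        C ^ a * L * (powN NX a U + ENNReal.ofReal t * powN NY a V) := by
    have hφ (x : ι) : |(|f x| ^ (1 / a))| ≤
        2 ^ (1 / a) * |U x| ^ (1 / a) + 2 ^ (1 / a) * |V x| ^ (1 / a) := calc
      |(|f x| ^ (1 / a))| = |f x| ^ (1 / a) := abs_of_nonneg (by positivity)
      _ ≤ (|U x| + |V x|) ^ (1 / a) := by gcongr; rw [hUV]; exact abs_add_le _ _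
      _ ≤ (2 * |U x|) ^ (1 / a) + (2 * |V x|) ^ (1 / a) :=
        Real.add_rpow_le_rpow_two_mul_add (abs_nonneg _) (abs_nonneg _) (by positivity)
      _ = _ := by rw [Real.mul_rpow, Real.mul_rpow] <;> positivity
    choose u v huv hu hv using fun x =>
      exists_eq_add_of_abs_le_add (hφ x) (by positivity) (by positivity)
    set X := powN NX a U
    set Y := ENNReal.ofReal t * powN NY a V
    calc KN NX NY (t ^ a⁻¹) (fun x => |f x| ^ (1 / a)) ^ a
        ≤ (NX u + ENNReal.ofReal (t ^ a⁻¹) * NY v) ^ a := by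
          gcongr; exact KN_le_of_eq_add huv
      _ ≤ (C * X ^ a⁻¹ + ENNReal.ofReal (t ^ a⁻¹) * (C * powN NY a V ^ a⁻¹)) ^ a := by
          gcongr
          exacts [le_mul_powN_rpow_inv_of_abs_le hX2 ha.ne' hu,
            le_mul_powN_rpow_inv_of_abs_le hY2 ha.ne' hv]
      _ = C ^ a * (X ^ a⁻¹ + Y ^ a⁻¹) ^ a := by
          rw [← ENNReal.ofReal_rpow_of_nonneg ht (by positivity),
            ENNReal.mul_rpow_of_nonneg _ _ (by positivity : 0 ≤ a⁻¹),
            ← ENNReal.mul_rpow_of_nonneg _ _ ha.le]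
          ring_nf
      _ ≤ C ^ a * (L * ((X ^ a⁻¹) ^ a + (Y ^ a⁻¹) ^ a)) := by
          gcongr; exact ENNReal.rpow_add_le_mul_rpow_add_rpow' _ _ ha.le
      _ = C ^ a * L * (X + Y) := by
          rw [ENNReal.rpow_inv_rpow ha.ne', ENNReal.rpow_inv_rpow ha.ne', mul_assoc]
  simpa using le_mul_KN_rpow one_pos hCL fun U V hUV => by simpa using key U V hUV

end KFunctional

section RealInterpolation

open Set

variable {K K' : ℝ → ℝ≥0∞} {θ a : ℝ} {p : ℝ≥0∞}

theorem interpOfK_mono (h : ∀ t, 0 < t → K t ≤ K' t) : interpOfK K θ p ≤ interpOfK K' θ p := by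
  unfold interpOfK
  split_ifs
  · exact iSup_mono fun t => by gcongr; exact h t t.2
  · refine ENNReal.rpow_le_rpow (setLIntegral_mono' measurableSet_Ioi fun t ht => ?_)
      (by positivity)
    gcongr
    exact h t ht

theorem interpOfK_const_mul {c : ℝ≥0∞} (hc : c ≠ ⊤) (hp : p ≠ 0) :
    interpOfK (fun t => c * K t) θ p = c * interpOfK K θ p := by
  unfold interpOfK
  split_ifs with hp_top
  · simp_rw [mul_left_comm _ c, ENNReal.mul_iSup]
  · have hpt : 0 < p.toReal := ENNReal.toReal_pos hp hp_top
    simp_rw [mul_left_comm _ c, ENNReal.mul_rpow_of_nonneg _ _ hpt.le, mul_div_assoc]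
    rw [lintegral_const_mul' _ _ (rpow_ne_top_of_nonneg hpt.le hc),
      ENNReal.mul_rpow_of_nonneg _ _ (by positivity), ← ENNReal.rpow_mul,
      mul_one_div_cancel hpt.ne', ENNReal.rpow_one]

theorem interpOfK_le_mul_of_le_mul {c : ℝ≥0∞} (hc : c ≠ ⊤) (hp : p ≠ 0)
    (h : ∀ t, 0 < t → K t ≤ c * K' t) : interpOfK K θ p ≤ c * interpOfK K' θ p :=
  interpOfK_const_mul (K := K') hc hp ▸ interpOfK_mono h

theorem iSup_Ioi_comp_rpow_inv (ha : a ≠ 0) (g : ℝ → ℝ≥0∞) :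
    ⨆ t : Ioi (0 : ℝ), g ((t : ℝ) ^ a⁻¹) = ⨆ s : Ioi (0 : ℝ), g s :=
  le_antisymm (iSup_le fun t => le_iSup_of_le ⟨_, Real.rpow_pos_of_pos t.2 _⟩ le_rfl)
    (iSup_le fun s => le_iSup_of_le ⟨_, Real.rpow_pos_of_pos s.2 a⟩ <| by
      simp [Real.rpow_rpow_inv (le_of_lt s.2) ha])

theorem lintegral_Ioi_comp_rpow_inv_div (ha : 0 < a) (g : ℝ → ℝ≥0∞) :
    ∫⁻ t in Ioi 0, g (t ^ a⁻¹) / ENNReal.ofReal t =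
      ENNReal.ofReal a * ∫⁻ s in Ioi 0, g s / ENNReal.ofReal s := by
  have himage : (fun s : ℝ => s ^ a) '' Ioi 0 = Ioi 0 := by
    ext t
    refine ⟨fun ⟨s, hs, hst⟩ => hst ▸ Real.rpow_pos_of_pos hs a, fun ht => ?_⟩
    exact ⟨t ^ a⁻¹, Real.rpow_pos_of_pos ht _, Real.rpow_inv_rpow (le_of_lt ht) ha.ne'⟩
  conv_lhs => rw [← himage]
  rw [lintegral_image_eq_lintegral_abs_deriv_mul measurableSet_Ioi
    (fun s hs => (Real.hasDerivAt_rpow_const (Or.inl (ne_of_gt hs))).hasDerivWithinAt)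
    ((Real.rpow_left_injOn ha.ne').mono fun s (hs : 0 < s) => hs.le),
    ← lintegral_const_mul' _ _ ENNReal.ofReal_ne_top]
  refine setLIntegral_congr_fun measurableSet_Ioi fun s (hs : 0 < s) => ?_
  rw [Real.rpow_rpow_inv hs.le ha.ne', div_eq_mul_inv, div_eq_mul_inv,
    ← ENNReal.ofReal_inv_of_pos (by positivity), ← ENNReal.ofReal_inv_of_pos hs, mul_left_comm,
    mul_left_comm (ENNReal.ofReal a), ← ENNReal.ofReal_mul (abs_nonneg _),
    ← ENNReal.ofReal_mul ha.le,
    abs_of_pos (by positivity), Real.rpow_sub_one hs.ne']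
  congr 2
  field_simp

theorem interpOfK_comp_rpow_inv_rpow (ha : 0 < a) (K : ℝ → ℝ≥0∞) :
    interpOfK (fun t => K (t ^ a⁻¹) ^ a) θ (p / ENNReal.ofReal a) =
      ENNReal.ofReal a ^ (1 / (p / ENNReal.ofReal a).toReal) * interpOfK K θ p ^ a := by
  set H : ℝ → ℝ≥0∞ := fun s => ENNReal.ofReal (s ^ (-θ)) * K s
  have hweight (t : ℝ) (ht : 0 < t) :
      ENNReal.ofReal (t ^ (-θ)) * K (t ^ a⁻¹) ^ a = H (t ^ a⁻¹) ^ a := by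
    rw [ENNReal.mul_rpow_of_nonneg _ _ ha.le, ENNReal.ofReal_rpow_of_nonneg (by positivity) ha.le,
      ← Real.rpow_mul (by positivity), ← Real.rpow_mul ht.le, mul_left_comm,
      inv_mul_cancel₀ ha.ne', mul_one]
  unfold interpOfK
  by_cases hp : p = ⊤
  · subst hp
    rw [if_pos (top_div_of_ne_top ofReal_ne_top), if_pos rfl, top_div_of_ne_top ofReal_ne_top,
      toReal_top, _root_.div_zero, rpow_zero, one_mul]
    calc ⨆ t : Ioi (0 : ℝ), ENNReal.ofReal ((t : ℝ) ^ (-θ)) * K ((t : ℝ) ^ a⁻¹) ^ a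
        = ⨆ t : Ioi (0 : ℝ), H ((t : ℝ) ^ a⁻¹) ^ a := iSup_congr fun t => hweight t t.2
      _ = ⨆ s : Ioi (0 : ℝ), H s ^ a := iSup_Ioi_comp_rpow_inv ha.ne' fun s => H s ^ a
      _ = (⨆ s : Ioi (0 : ℝ), H s) ^ a := ((ENNReal.orderIsoRpow a ha).map_iSup _).symm
  · have hq : p / ENNReal.ofReal a ≠ ⊤ := ENNReal.div_ne_top hp (ofReal_pos.2 ha).ne'
    rw [if_neg hq, if_neg hp, ENNReal.toReal_div, ENNReal.toReal_ofReal ha.le]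
    set pt := p.toReal
    calc (∫⁻ t in Ioi 0, (ENNReal.ofReal (t ^ (-θ)) * K (t ^ a⁻¹) ^ a) ^ (pt / a) /
          ENNReal.ofReal t) ^ (1 / (pt / a))
        = (∫⁻ t in Ioi 0, H (t ^ a⁻¹) ^ pt / ENNReal.ofReal t) ^ (1 / (pt / a)) := by
          congr 1
          refine setLIntegral_congr_fun measurableSet_Ioi fun t (ht : 0 < t) => ?_
          rw [hweight t ht, ← ENNReal.rpow_mul, mul_div_cancel₀ _ ha.ne']
      _ = (ENNReal.ofReal a * ∫⁻ s in Ioi 0, H s ^ pt / ENNReal.ofReal s) ^ (1 / (pt / a)) := by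
          rw [lintegral_Ioi_comp_rpow_inv_div ha fun s => H s ^ pt]
      _ = ENNReal.ofReal a ^ (1 / (pt / a)) *
            ((∫⁻ s in Ioi 0, H s ^ pt / ENNReal.ofReal s) ^ (1 / pt)) ^ a := by
          rw [ENNReal.mul_rpow_of_nonneg _ _ (by positivity), ← ENNReal.rpow_mul, one_div_div,
            one_div_mul_eq_div]

end RealInterpolation

theorem interp_pow_scale_general
    {ι : Type*} [MeasurableSpace ι] (μ : Measure ι)
    (NX NY : LatN ι) (hX : IsLat μ NX) (hY : IsLat μ NY)
    (hqX : IsQNormed NX) (hqY : IsQNormed NY)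
    (a θ : ℝ) (p : ℝ≥0∞) (ha : 0 < a) (hp : 0 < p) :
    ∃ c : ℝ≥0∞, 0 < c ∧ c ≠ ⊤ ∧ ∀ f : ι → ℝ,
      powN (interpN NX NY θ p) a f ≤
          c * interpN (powN NX a) (powN NY a) θ (p / ENNReal.ofReal a) f ∧
      interpN (powN NX a) (powN NY a) θ (p / ENNReal.ofReal a) f ≤
          c * powN (interpN NX NY θ p) a f := by
  obtain ⟨C₁, hC₁, hK₁⟩ := KN_powN_le_mul_KN_rpow hX hY hqX hqY ha
  obtain ⟨C₂, hC₂, hK₂⟩ := KN_rpow_le_mul_KN_powN hX hY hqX hqY ha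
  have hq : p / ENNReal.ofReal a ≠ 0 := (ENNReal.div_pos hp.ne' ofReal_ne_top).ne'
  set e := ENNReal.ofReal a ^ (1 / (p / ENNReal.ofReal a).toReal)
  have he₀ : e ≠ 0 := (ENNReal.rpow_pos (ofReal_pos.2 ha) ofReal_ne_top).ne'
  have he : e ≠ ⊤ := rpow_ne_top_of_nonneg (by positivity) ofReal_ne_top
  refine ⟨e⁻¹ * C₂ + C₁ * e + 1, by positivity, by finiteness, fun f => ?_⟩
  set P := powN (interpN NX NY θ p) a f
  set I := interpN (powN NX a) (powN NY a) θ (p / ENNReal.ofReal a) f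
  have hJ : interpOfK (fun t => KN NX NY (t ^ a⁻¹) (fun x => |f x| ^ (1 / a)) ^ a) θ
      (p / ENNReal.ofReal a) = e * P :=
    interpOfK_comp_rpow_inv_rpow ha fun s => KN NX NY s fun x => |f x| ^ (1 / a)
  have h₁ : e * P ≤ C₂ * I := hJ ▸ interpOfK_le_mul_of_le_mul hC₂ hq fun t ht => hK₂ f t ht.le
  have h₂ : I ≤ C₁ * (e * P) := hJ ▸ interpOfK_le_mul_of_le_mul hC₁ hq fun t ht => hK₁ f t ht.le
  constructor
  · calc P = e⁻¹ * (e * P) := by rw [← mul_assoc, ENNReal.inv_mul_cancel he₀ he, one_mul]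
      _ ≤ e⁻¹ * C₂ * I := by rw [mul_assoc]; gcongr
      _ ≤ _ := by gcongr; exact le_self_add.trans le_self_add
  · calc I ≤ C₁ * e * P := by rw [mul_assoc]; exact h₂
      _ ≤ _ := by gcongr; exact le_add_self.trans le_self_add

/-- For quasi-Banach lattices `X, Y`, `α > 0`, `0 < θ < 1`
and `0 < p ≤ ∞`, one has `((X, Y)_{θ,p})^α = (X^α, Y^α)_{θ, p/α}` with
equivalent quasinorms. -/
theorem interp_pow_scale
    {ι : Type*} [MeasurableSpace ι] (μ : Measure ι) [SigmaFinite μ]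
    (NX NY : LatN ι) (hX : IsLat μ NX) (hY : IsLat μ NY)
    (hqX : IsQNormed NX) (hqY : IsQNormed NY)
    (a θ : ℝ) (p : ℝ≥0∞) (ha : 0 < a) (hθ0 : 0 < θ) (hθ1 : θ < 1) (hp : 0 < p) :
    ∃ c : ℝ≥0∞, 0 < c ∧ c ≠ ⊤ ∧ ∀ f : ι → ℝ,
      powN (interpN NX NY θ p) a f ≤
          c * interpN (powN NX a) (powN NY a) θ (p / ENNReal.ofReal a) f ∧
      interpN (powN NX a) (powN NY a) θ (p / ENNReal.ofReal a) f ≤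
          c * powN (interpN NX NY θ p) a f :=
  interp_pow_scale_general μ NX NY hX hY hqX hqY a θ p ha hp
end
end

section
/- Suppose a couple (X, Y) of quasi-normed lattices of measurable functions is boundedly AK-stable with constant C: for all f ∈ X, g ∈ Y there is U ∈ H^∞ with ‖U‖_{H^∞} ≤ C, ‖Ug‖_X ≤ C‖f‖_X, and ‖(1−U)f‖_Y ≤ C‖g‖_Y. Then for every δ > 0 the couple (X^δ, Y^δ) is boundedly AK-stable: for all f ∈ X^δ, g ∈ Y^δ there is V ∈ H^∞ with ‖V‖ bounded, ‖|V|^δ g‖_{X^δ} ≤ C^δ ‖f‖_{X^δ} and ‖|1−V|^δ f‖_{Y^δ} ≤ C^δ ‖g‖_{Y^δ}; combined with the corona theorem this yields a genuine bounded AK-decomposition for (X^δ, Y^δ). -/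
open MeasureTheory Filter Topology ENNReal

noncomputable section

instance fact_two_pi_pos : Fact (0 < 2 * Real.pi) := ⟨by positivity⟩

/-- The unit circle, realized as `ℝ / 2πℤ`. -/
abbrev Circle2 := AddCircle (2 * Real.pi)

/-- Boundary `H^∞`-type condition on the circle: (a.e. strongly) measurable with
vanishing negative Fourier coefficients. -/
def IsHinfFiber (u : Circle2 → ℂ) : Prop :=
  AEStronglyMeasurable u (volume : Measure Circle2) ∧
    ∀ n : ℤ, n < 0 → fourierCoeff u n = 0

/-- A bounded outer function on the circle: the modulus of its mean (the value of
its analytic extension at the origin) equals the exponential of the mean of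
`log` of its modulus. -/
def IsOuterHinf (u : Circle2 → ℂ) : Prop :=
  IsHinfFiber u ∧ (∃ C : ℝ, ∀ᵐ x ∂(volume : Measure Circle2), ‖u x‖ ≤ C) ∧
    Integrable (fun x => Real.log (‖u x‖)) AddCircle.haarAddCircle ∧
    ‖fourierCoeff u 0‖ =
      Real.exp (∫ x, Real.log (‖u x‖) ∂(AddCircle.haarAddCircle))

/-- Boundary values of the Smirnov class `N⁺`: quotients `g / h` with `g`
bounded analytic and `h` bounded outer. -/
def MemSmirnov (f : Circle2 → ℂ) : Prop :=
  ∃ g h : Circle2 → ℂ, IsHinfFiber g ∧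
    (∃ C : ℝ, ∀ᵐ x ∂(volume : Measure Circle2), ‖g x‖ ≤ C) ∧
    IsOuterHinf h ∧ ∀ᵐ x ∂(volume : Measure Circle2), f x = g x / h x

/-- Outer functions in the Smirnov class: quotients of bounded outer functions. -/
def IsOuterSmirnov (f : Circle2 → ℂ) : Prop :=
  ∃ g h : Circle2 → ℂ, IsOuterHinf g ∧ IsOuterHinf h ∧
    ∀ᵐ x ∂(volume : Measure Circle2), f x = g x / h x

/-- `‖φ‖_{BMO} ≤ C`, via mean oscillation over arcs of the circle. -/
def BMOle (φ : Circle2 → ℝ) (C : ℝ) : Prop :=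
  ∀ a b : ℝ, a < b → b - a ≤ 2 * Real.pi →
    (b - a)⁻¹ * ∫ x in a..b, |φ (x : Circle2) -
      (b - a)⁻¹ * ∫ y in a..b, φ (y : Circle2)| ≤ C

/-- Bounded AK-stability (on the circle) of a couple of lattice gauges with
constant `C`: measurable splittings can be produced by multiplication with a
bounded analytic function `U`. -/
def BAKStableC (NX NY : LatN Circle2) (C : ℝ) : Prop :=
  ∀ f g : Circle2 → ℝ, NX f ≠ ⊤ → NY g ≠ ⊤ →
    ∃ U : Circle2 → ℂ, IsHinfFiber U ∧
      (∀ᵐ x ∂(volume : Measure Circle2), ‖U x‖ ≤ C) ∧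
      NX (fun x => ‖U x‖ * |g x|) ≤ ENNReal.ofReal C * NX f ∧
      NY (fun x => ‖1 - U x‖ * |f x|) ≤ ENNReal.ofReal C * NY g

/-!
Apply the AK-stability of `(X, Y)` to `|f|^{1/δ} ∈ X` and `|g|^{1/δ} ∈ Y`. Since
`(|U|^δ |g|)^{1/δ} = |U| |g|^{1/δ}`, raising the two resulting estimates to the power `δ`
gives those for `(X^δ, Y^δ)`, with the same multiplier `V = U`.
-/

section PowerLattice

variable {α : Type*} (N : LatN α) {δ : ℝ}

theorem powN_eq_top_iff (hδ : 0 < δ) (f : α → ℝ) :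
    powN N δ f = ⊤ ↔ (N fun x => |f x| ^ (1 / δ)) = ⊤ :=
  ENNReal.rpow_eq_top_iff_of_pos hδ

theorem abs_rpow_mul_abs_rpow_inv (hδ : 0 < δ) {a : ℝ} (ha : 0 ≤ a) (b : ℝ) :
    abs (a ^ δ * |b|) ^ (1 / δ) = a * |b| ^ (1 / δ) := by
  have haδ : 0 ≤ a ^ δ := Real.rpow_nonneg ha δ
  rw [abs_of_nonneg (mul_nonneg haδ (abs_nonneg b)), Real.mul_rpow haδ (abs_nonneg b),
    ← Real.rpow_mul ha, mul_one_div_cancel hδ.ne', Real.rpow_one]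

theorem powN_rpow_mul_abs (hδ : 0 < δ) {h : α → ℝ} (hh : ∀ x, 0 ≤ h x) (k : α → ℝ) :
    powN N δ (fun x => h x ^ δ * |k x|) = (N fun x => h x * |k x| ^ (1 / δ)) ^ δ := by
  simp only [powN, abs_rpow_mul_abs_rpow_inv hδ (hh _)]

theorem powN_rpow_mul_le (hδ : 0 < δ) {C : ℝ} (hC : 0 ≤ C) {h : α → ℝ} (hh : ∀ x, 0 ≤ h x)
    {f k : α → ℝ}
    (hle : (N fun x => h x * |k x| ^ (1 / δ)) ≤ ENNReal.ofReal C * N fun x => |f x| ^ (1 / δ)) :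
    powN N δ (fun x => h x ^ δ * |k x|) ≤ ENNReal.ofReal (C ^ δ) * powN N δ f :=
  calc powN N δ (fun x => h x ^ δ * |k x|)
      = (N fun x => h x * |k x| ^ (1 / δ)) ^ δ := powN_rpow_mul_abs N hδ hh k
    _ ≤ (ENNReal.ofReal C * N fun x => |f x| ^ (1 / δ)) ^ δ :=
        ENNReal.rpow_le_rpow hle hδ.le
    _ = ENNReal.ofReal (C ^ δ) * powN N δ f := by
        rw [ENNReal.mul_rpow_of_nonneg _ _ hδ.le, ENNReal.ofReal_rpow_of_nonneg hC hδ.le, powN]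

end PowerLattice

theorem bak_pow_scale_general
    (NX NY : LatN Circle2)
    (C : ℝ) (hC : 0 < C) (hBAK : BAKStableC NX NY C) :
    ∀ δ : ℝ, 0 < δ → ∀ f g : Circle2 → ℝ,
      powN NX δ f ≠ ⊤ → powN NY δ g ≠ ⊤ →
      ∃ V : Circle2 → ℂ, IsHinfFiber V ∧
        (∀ᵐ x ∂(volume : Measure Circle2), ‖V x‖ ≤ C) ∧
        powN NX δ (fun x => ‖V x‖ ^ δ * |g x|) ≤
            ENNReal.ofReal (C ^ δ) * powN NX δ f ∧
        powN NY δ (fun x => ‖1 - V x‖ ^ δ * |f x|) ≤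
            ENNReal.ofReal (C ^ δ) * powN NY δ g := by
  intro δ hδ f g hf hg
  obtain ⟨U, hU, hUC, hUX, hUY⟩ := hBAK (fun x => |f x| ^ (1 / δ)) (fun x => |g x| ^ (1 / δ))
    ((powN_eq_top_iff NX hδ f).not.mp hf) ((powN_eq_top_iff NY hδ g).not.mp hg)
  have habs : ∀ (k : Circle2 → ℝ) x, abs (|k x| ^ (1 / δ)) = |k x| ^ (1 / δ) := fun k x =>
    abs_of_nonneg (Real.rpow_nonneg (abs_nonneg _) _)
  simp only [habs] at hUX hUY
  exact ⟨U, hU, hUC,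
    powN_rpow_mul_le NX hδ hC.le (fun _ => norm_nonneg _) hUX,
    powN_rpow_mul_le NY hδ hC.le (fun _ => norm_nonneg _) hUY⟩

/-- If `(X, Y)` is boundedly AK-stable with constant `C`, then
for every `δ > 0` the couple `(X^δ, Y^δ)` is boundedly AK-stable: for all
`f ∈ X^δ`, `g ∈ Y^δ` there is `V ∈ H^∞` with `‖V‖_{H^∞} ≤ C`,
`‖|V|^δ g‖_{X^δ} ≤ C^δ ‖f‖_{X^δ}` and `‖|1-V|^δ f‖_{Y^δ} ≤ C^δ ‖g‖_{Y^δ}`. -/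
theorem bak_pow_scale
    (NX NY : LatN Circle2)
    (hX : IsLat (volume : Measure Circle2) NX)
    (hY : IsLat (volume : Measure Circle2) NY)
    (hqX : IsQNormed NX) (hqY : IsQNormed NY)
    (C : ℝ) (hC : 0 < C) (hBAK : BAKStableC NX NY C) :
    ∀ δ : ℝ, 0 < δ → ∀ f g : Circle2 → ℝ,
      powN NX δ f ≠ ⊤ → powN NY δ g ≠ ⊤ →
      ∃ V : Circle2 → ℂ, IsHinfFiber V ∧
        (∀ᵐ x ∂(volume : Measure Circle2), ‖V x‖ ≤ C) ∧
        powN NX δ (fun x => ‖V x‖ ^ δ * |g x|) ≤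
            ENNReal.ofReal (C ^ δ) * powN NX δ f ∧
        powN NY δ (fun x => ‖1 - V x‖ ^ δ * |f x|) ≤
            ENNReal.ofReal (C ^ δ) * powN NY δ g :=
  bak_pow_scale_general NX NY C hC hBAK
end
end
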